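/- Let α₁, α₂, a₀, a₁, b₀, b₁ be real constants with Δ₂ = b₁² − 4b₀ > 0, and set λ₊ = (−b₁ + √Δ₂)/2. Define γ₂ = −4α₂b₀ + α₂a₀ + 8α₁b₀² − 16α₁b₀b₁² − 2α₁a₀b₀ + 4α₁b₁⁴ + 2α₂b₁² + 6α₁a₁b₀b₁ − 2α₁a₁b₁³ − α₂a₁b₁ + α₁a₀b₁² and γ₃ = −4α₁b₁³ − 2α₂b₁ + α₂a₁ + 2α₁a₁b₁² − 2α₁a₁b₀ − α₁a₀b₁ + 8α₁b₀b₁. Then the following are equivalent: (i) for all infinitely differentiable u : ℝ → ℝ with u''(x) + a₁u'(x) + a₀u(x) = 0 on ℝ and all v of the form v(x) = Ce^{λ₊x} with a real constant C, the function F(x) = u'''(x) + α₁(v'(x)² + v(x)v''(x)) + α₂v(x)² satisfies F''(x) + a₁F'(x) + a₀F(x) = 0 for all x ∈ ℝ; (ii) γ₂ + √Δ₂ · γ₃ = 0. -/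

import Mathlib

/-- The operator `F[u, v] = (u_{xx} + α₁ v v_x)_x + α₂ v²` applied to functions of `x`:
`F(x) = u'''(x) + α₁ (v'(x)² + v(x) v''(x)) + α₂ v(x)²`. -/
noncomputable def Fop (α₁ α₂ : ℝ) (u v : ℝ → ℝ) : ℝ → ℝ := fun x =>
  iteratedDeriv 3 u x + α₁ * ((deriv v x) ^ 2 + v x * iteratedDeriv 2 v x) + α₂ * (v x) ^ 2

private lemma expHasDeriv (C c x : ℝ) :
    HasDerivAt (fun y => C * Real.exp (c * y)) (c * C * Real.exp (c * x)) x := by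
  have h := ((Real.hasDerivAt_exp (c * x)).comp x
    ((hasDerivAt_id x).const_mul c)).const_mul C
  exact h.congr_deriv (by ring)

private lemma expDeriv (C c : ℝ) :
    deriv (fun y => C * Real.exp (c * y)) = fun x => c * C * Real.exp (c * x) :=
  funext fun x => (expHasDeriv C c x).deriv

private lemma diffIter (u : ℝ → ℝ) (hu : ContDiff ℝ (⊤ : ℕ∞) u) (n : ℕ) :
    Differentiable ℝ (iteratedDeriv n u) :=
  hu.differentiable_iteratedDeriv n
    (by exact_mod_cast ENat.natCast_lt_top n)

private lemma ode_iter (u : ℝ → ℝ) (hu : ContDiff ℝ (⊤ : ℕ∞) u) (a₀ a₁ : ℝ)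
    (h : ∀ x : ℝ, iteratedDeriv 2 u x + a₁ * deriv u x + a₀ * u x = 0) :
    ∀ n : ℕ, ∀ x : ℝ, iteratedDeriv (n + 2) u x + a₁ * iteratedDeriv (n + 1) u x
      + a₀ * iteratedDeriv n u x = 0 := by
  intro n
  induction n with
  | zero => intro x; simpa [iteratedDeriv_one, iteratedDeriv_zero] using h x
  | succ n ih =>
    intro x
    have hfun : iteratedDeriv (n + 2) u =
        fun y => -(a₁ * iteratedDeriv (n + 1) u y + a₀ * iteratedDeriv n u y) :=
      funext fun y => by linarith [ih y]
    have hd1 := diffIter u hu (n + 1)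
    have hd0 := diffIter u hu n
    have hH : HasDerivAt
        (fun y => -(a₁ * iteratedDeriv (n + 1) u y + a₀ * iteratedDeriv n u y))
        (-(a₁ * deriv (iteratedDeriv (n + 1) u) x + a₀ * deriv (iteratedDeriv n u) x)) x :=
      ((((hd1 x).hasDerivAt.const_mul a₁).add ((hd0 x).hasDerivAt.const_mul a₀)).neg)
    have hstep : iteratedDeriv (n + 3) u x =
        -(a₁ * iteratedDeriv (n + 2) u x + a₀ * iteratedDeriv (n + 1) u x) := by
      calc iteratedDeriv (n + 3) u x = deriv (iteratedDeriv (n + 2) u) x := by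
              rw [iteratedDeriv_succ]
        _ = -(a₁ * deriv (iteratedDeriv (n + 1) u) x + a₀ * deriv (iteratedDeriv n u) x) := by
              rw [hfun]; exact hH.deriv
        _ = -(a₁ * iteratedDeriv (n + 2) u x + a₀ * iteratedDeriv (n + 1) u x) := by
              rw [← iteratedDeriv_succ, ← iteratedDeriv_succ]
    have hn : (n + 1) + 2 = n + 3 := by ring
    rw [hn, hstep]
    ring

/-- Assume `Δ₂ = b₁² − 4 b₀ > 0` and set `λ₊ = (−b₁ + √Δ₂)/2`. Then the
invariance condition for the first equation, for all smooth `u` with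
`u'' + a₁ u' + a₀ u = 0` and all `v = C e^{λ₊ x}`, holds if and only if
`γ₂ + √Δ₂ · γ₃ = 0`. -/
theorem invariance_smaller_subspace_iff
    (α₁ α₂ a₀ a₁ b₀ b₁ : ℝ) (hΔ : b₁ ^ 2 - 4 * b₀ > 0) :
    (∀ u : ℝ → ℝ, ContDiff ℝ (⊤ : ℕ∞) u →
      (∀ x : ℝ, iteratedDeriv 2 u x + a₁ * deriv u x + a₀ * u x = 0) →
      ∀ C : ℝ,
      ∀ x : ℝ,
        iteratedDeriv 2
            (Fop α₁ α₂ u (fun y =>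
              C * Real.exp ((-b₁ + Real.sqrt (b₁ ^ 2 - 4 * b₀)) / 2 * y))) x
          + a₁ * deriv
            (Fop α₁ α₂ u (fun y =>
              C * Real.exp ((-b₁ + Real.sqrt (b₁ ^ 2 - 4 * b₀)) / 2 * y))) x
          + a₀ * Fop α₁ α₂ u (fun y =>
              C * Real.exp ((-b₁ + Real.sqrt (b₁ ^ 2 - 4 * b₀)) / 2 * y)) x = 0) ↔
    (-4 * α₂ * b₀ + α₂ * a₀ + 8 * α₁ * b₀ ^ 2 - 16 * α₁ * b₀ * b₁ ^ 2
        - 2 * α₁ * a₀ * b₀ + 4 * α₁ * b₁ ^ 4 + 2 * α₂ * b₁ ^ 2 + 6 * α₁ * a₁ * b₀ * b₁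
        - 2 * α₁ * a₁ * b₁ ^ 3 - α₂ * a₁ * b₁ + α₁ * a₀ * b₁ ^ 2)
      + Real.sqrt (b₁ ^ 2 - 4 * b₀) *
        (-4 * α₁ * b₁ ^ 3 - 2 * α₂ * b₁ + α₂ * a₁ + 2 * α₁ * a₁ * b₁ ^ 2
          - 2 * α₁ * a₁ * b₀ - α₁ * a₀ * b₁ + 8 * α₁ * b₀ * b₁) = 0 := by
  set s := Real.sqrt (b₁ ^ 2 - 4 * b₀) with hs_def
  have hs2 : s ^ 2 = b₁ ^ 2 - 4 * b₀ := Real.sq_sqrt hΔ.le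
  set lam := (-b₁ + s) / 2 with hlam_def
  set Ktot := (2 * α₁ * lam ^ 2 + α₂) * (4 * lam ^ 2 + 2 * a₁ * lam + a₀) with hK_def
  -- algebraic identity : γ₂ + s γ₃ = Ktot
  have halg :
      (-4 * α₂ * b₀ + α₂ * a₀ + 8 * α₁ * b₀ ^ 2 - 16 * α₁ * b₀ * b₁ ^ 2
        - 2 * α₁ * a₀ * b₀ + 4 * α₁ * b₁ ^ 4 + 2 * α₂ * b₁ ^ 2 + 6 * α₁ * a₁ * b₀ * b₁
        - 2 * α₁ * a₁ * b₁ ^ 3 - α₂ * a₁ * b₁ + α₁ * a₀ * b₁ ^ 2)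
      + s *
        (-4 * α₁ * b₁ ^ 3 - 2 * α₂ * b₁ + α₂ * a₁ + 2 * α₁ * a₁ * b₁ ^ 2
          - 2 * α₁ * a₁ * b₀ - α₁ * a₀ * b₁ + 8 * α₁ * b₀ * b₁) = Ktot := by
    rw [hK_def, hlam_def]
    linear_combination (-(α₂ + (1/2) * α₁ * s ^ 2 - 2 * b₁ * α₁ * s + (7/2) * b₁ ^ 2 * α₁
      - 2 * b₀ * α₁ + (1/2) * a₁ * α₁ * s - (3/2) * a₁ * b₁ * α₁ + (1/2) * a₀ * α₁)) * hs2
  -- key computation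
  have key : ∀ u : ℝ → ℝ, ContDiff ℝ (⊤ : ℕ∞) u →
      (∀ x : ℝ, iteratedDeriv 2 u x + a₁ * deriv u x + a₀ * u x = 0) →
      ∀ C x : ℝ,
        iteratedDeriv 2 (Fop α₁ α₂ u (fun y => C * Real.exp (lam * y))) x
          + a₁ * deriv (Fop α₁ α₂ u (fun y => C * Real.exp (lam * y))) x
          + a₀ * Fop α₁ α₂ u (fun y => C * Real.exp (lam * y)) x
        = Ktot * (C ^ 2 * Real.exp (2 * lam * x)) := by
    intro u hu hODE C x
    set M := (2 * α₁ * lam ^ 2 + α₂) * C ^ 2 with hM_def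
    have hexp2 : ∀ y : ℝ, Real.exp (lam * y) ^ 2 = Real.exp (2 * lam * y) := by
      intro y
      rw [sq, ← Real.exp_add]
      ring_nf
    have hFop : Fop α₁ α₂ u (fun y => C * Real.exp (lam * y)) =
        fun y => iteratedDeriv 3 u y + M * Real.exp (2 * lam * y) := by
      funext y
      have hv2 : iteratedDeriv 2 (fun z => C * Real.exp (lam * z)) y
          = lam * (lam * C) * Real.exp (lam * y) := by
        rw [iteratedDeriv_succ, iteratedDeriv_one, expDeriv C lam, expDeriv (lam * C) lam]
      simp only [Fop, expDeriv C lam, hv2]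
      rw [← hexp2 y, hM_def]
      ring
    have hd3 := diffIter u hu 3
    have hd4 := diffIter u hu 4
    have hD1 : deriv (Fop α₁ α₂ u (fun y => C * Real.exp (lam * y))) =
        fun y => iteratedDeriv 4 u y + 2 * lam * M * Real.exp (2 * lam * y) := by
      rw [hFop]
      funext y
      rw [deriv_fun_add (hd3 y) ((expHasDeriv M (2 * lam) y).differentiableAt),
        expDeriv M (2 * lam), ← iteratedDeriv_succ]
    have hD2 : iteratedDeriv 2 (Fop α₁ α₂ u (fun y => C * Real.exp (lam * y))) x =
        iteratedDeriv 5 u x + 2 * lam * (2 * lam * M) * Real.exp (2 * lam * x) := by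
      rw [iteratedDeriv_succ, iteratedDeriv_one, hD1]
      rw [deriv_fun_add (hd4 x) ((expHasDeriv (2 * lam * M) (2 * lam) x).differentiableAt),
        expDeriv (2 * lam * M) (2 * lam), ← iteratedDeriv_succ]
    have hode3 := ode_iter u hu a₀ a₁ hODE 3 x
    rw [hD2, hD1, hFop]
    simp only []
    have h5 : iteratedDeriv 5 u x = -(a₁ * iteratedDeriv 4 u x + a₀ * iteratedDeriv 3 u x) := by
      linarith [hode3]
    rw [h5, hK_def, hM_def]
    ring
  constructor
  · intro h
    have hzode : ∀ x : ℝ, iteratedDeriv 2 (fun _ : ℝ => (0 : ℝ)) x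
        + a₁ * deriv (fun _ : ℝ => (0 : ℝ)) x + a₀ * (fun _ : ℝ => (0 : ℝ)) x = 0 := by
      intro x
      simp [iteratedDeriv_succ, iteratedDeriv_zero]
    have h0 := h (fun _ => 0) contDiff_const hzode 1 0
    rw [key (fun _ => 0) contDiff_const hzode 1 0] at h0
    have hK0 : Ktot = 0 := by simpa using h0
    rw [halg]
    exact hK0
  · intro hγ u hu hODE C x
    rw [key u hu hODE C x]
    have hK0 : Ktot = 0 := by rw [← halg]; exact hγ
    rw [hK0]
    ring
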